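/- The matrix Q is orthogonal and satisfies Q^T A Q = diag(1, α, …, α) and Q^T B Q = diag(1, β, …, β) (each with m−1 repeated entries after the first). The matrix P is orthogonal and, writing D₁ = diag(1, γ, …, γ) and D₂ = diag(0, δ, …, δ) for the m×m diagonal matrices with m−1 repeated entries after the first, one has P^T H_odd P = [[D₁, D₂], [D₁, D₂]], P^T H_even P = [[D₁, −D₂], [−D₁, D₂]], and consequently, for H = (H_odd + H_even)/2, P^T H P = diag(1, γ, …, γ, 0, δ, …, δ); in particular P diagonalizes H. -/

import Mathlib

open Matrix

noncomputable section

attribute [local instance] Classical.propDecidable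

namespace Dipole

/-- the matrix `A = α I_m + ((1−α)/m) J` -/
def Amat (m : ℕ) (α : ℝ) : Matrix (Fin m) (Fin m) ℝ :=
  α • (1 : Matrix (Fin m) (Fin m) ℝ) + ((1 - α) / m) • Matrix.of fun _ _ => (1 : ℝ)

/-- the matrix `B = β I_m + ((1−β)/m) J` -/
def Bmat (m : ℕ) (β : ℝ) : Matrix (Fin m) (Fin m) ℝ :=
  β • (1 : Matrix (Fin m) (Fin m) ℝ) + ((1 - β) / m) • Matrix.of fun _ _ => (1 : ℝ)

/-- the block matrix `H_odd = [[A, B], [0, 0]]` -/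
def Hodd (m : ℕ) (α β : ℝ) : Matrix (Fin m ⊕ Fin m) (Fin m ⊕ Fin m) ℝ :=
  fromBlocks (Amat m α) (Bmat m β) 0 0

/-- the block matrix `H_even = [[0, 0], [B, A]]` -/
def Heven (m : ℕ) (α β : ℝ) : Matrix (Fin m ⊕ Fin m) (Fin m ⊕ Fin m) ℝ :=
  fromBlocks 0 0 (Bmat m β) (Amat m α)

/-- the orthogonal matrix `Q = (u, w_1, …, w_{m−1})` with `u = (1/√m)(1,…,1)ᵀ` and
`w_r = (1/√(r(r+1)))(1,…,1,−r,0,…,0)ᵀ` (`r` leading ones) -/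
def Qmat (m : ℕ) : Matrix (Fin m) (Fin m) ℝ :=
  Matrix.of fun i j =>
    if (j : ℕ) = 0 then (Real.sqrt m)⁻¹
    else if (i : ℕ) < (j : ℕ) then (Real.sqrt ((j : ℕ) * ((j : ℕ) + 1 : ℕ)))⁻¹
    else if (i : ℕ) = (j : ℕ) then
      -(((j : ℕ) : ℝ)) * (Real.sqrt ((j : ℕ) * ((j : ℕ) + 1 : ℕ)))⁻¹
    else 0

/-- the orthogonal matrix `P = (1/√2) [[Q, Q], [Q, −Q]]` -/
def Pmat (m : ℕ) : Matrix (Fin m ⊕ Fin m) (Fin m ⊕ Fin m) ℝ :=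
  (Real.sqrt 2)⁻¹ • fromBlocks (Qmat m) (Qmat m) (Qmat m) (-(Qmat m))

/-- `H_n = H_odd` for odd `n`, `H_even` for even `n` -/
def Hn (m : ℕ) (α β : ℝ) (n : ℕ) : Matrix (Fin m ⊕ Fin m) (Fin m ⊕ Fin m) ℝ :=
  if Odd n then Hodd m α β else Heven m α β

/-- `Π_{k,l} = (I + H_{k+1}/k) ⋯ (I + H_{l+1}/l)` for `k ≥ l`, and `Π_{k,l} = I` for `k < l` -/
def Pimat (m : ℕ) (α β : ℝ) (l : ℕ) : ℕ → Matrix (Fin m ⊕ Fin m) (Fin m ⊕ Fin m) ℝ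
  | 0 => 1
  | k + 1 =>
      if k + 1 < l then 1
      else ((1 : Matrix (Fin m ⊕ Fin m) (Fin m ⊕ Fin m) ℝ) +
        ((k : ℝ) + 1)⁻¹ • Hn m α β (k + 2)) * Pimat m α β l k

/-- `λ_{k,l}(c) = ∏_{i=l}^{k} (2i−1+2c)/(2i−1)` -/
def lam (l k : ℕ) (c : ℝ) : ℝ :=
  ∏ i ∈ Finset.Icc l k, (2 * (i : ℝ) - 1 + 2 * c) / (2 * (i : ℝ) - 1)

/-- `ρ = max{0, γ, δ}` with `γ = (α+β)/2`, `δ = (α−β)/2` -/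
def rho (α β : ℝ) : ℝ := max 0 (max ((α + β) / 2) ((α - β) / 2))

/-- the `ℓ²`-operator norm of a square real matrix -/
def opNorm {ι : Type*} [Fintype ι] [DecidableEq ι] (M : Matrix ι ι ℝ) : ℝ :=
  ‖Matrix.toEuclideanCLM (𝕜 := ℝ) M‖

/-- the submatrix obtained by deleting the first row and the first column
(rows and columns `2` through `2m`) -/
def lowerSub (m : ℕ) [NeZero m] (M : Matrix (Fin m ⊕ Fin m) (Fin m ⊕ Fin m) ℝ) :
    Matrix {i : Fin m ⊕ Fin m // i ≠ Sum.inl 0} {i : Fin m ⊕ Fin m // i ≠ Sum.inl 0} ℝ :=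
  M.submatrix Subtype.val Subtype.val

end Dipole

/-!
The columns of `Q` form the Helmert basis: an orthonormal basis whose first vector `u` spans
the all-ones direction, so `Qᵀ J Q = m e₀ e₀ᵀ` and `Qᵀ (a I + ((1 - a)/m) J) Q = diag(1, a, …, a)`.
The matrix `P` is `Q` tensored with the normalized `2 × 2` Hadamard matrix; conjugating a block
matrix `[[X, Y], [Z, W]]` by it yields the blocks `(X ± Y ± Z ± W)/2` conjugated by `Q`, which
for `H_odd` and `H_even` are half-sums and half-differences of `diag(1, α, …)`, `diag(1, β, …)`.
-/
namespace Dipole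

section HadamardBlocks

variable {n : Type*} [Fintype n]

def hadamardBlocks (Q : Matrix n n ℝ) : Matrix (n ⊕ n) (n ⊕ n) ℝ :=
  (√2)⁻¹ • fromBlocks Q Q Q (-Q)

theorem hadamardBlocks_transpose_mul_fromBlocks_mul (Q X Y Z W : Matrix n n ℝ) :
    (hadamardBlocks Q)ᵀ * fromBlocks X Y Z W * hadamardBlocks Q =
      (2⁻¹ : ℝ) • fromBlocks (Qᵀ * (X + Y + Z + W) * Q) (Qᵀ * (X - Y + Z - W) * Q)
        (Qᵀ * (X + Y - Z - W) * Q) (Qᵀ * (X - Y - Z + W) * Q) := by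
  have h2 : (√2)⁻¹ * (√2)⁻¹ = (2⁻¹ : ℝ) := by
    rw [← mul_inv, Real.mul_self_sqrt zero_le_two]
  rw [hadamardBlocks, transpose_smul, fromBlocks_transpose, transpose_neg, Matrix.smul_mul,
    Matrix.smul_mul, Matrix.mul_smul, smul_smul, h2, fromBlocks_multiply, fromBlocks_multiply]
  congr 1
  rw [fromBlocks_inj]
  refine ⟨?_, ?_, ?_, ?_⟩ <;> noncomm_ring

theorem hadamardBlocks_transpose_mul_self [DecidableEq n] {Q : Matrix n n ℝ} (hQ : Qᵀ * Q = 1) :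
    (hadamardBlocks Q)ᵀ * hadamardBlocks Q = 1 := by
  have := hadamardBlocks_transpose_mul_fromBlocks_mul Q 1 0 0 1
  simp only [fromBlocks_one, Matrix.mul_one, add_zero, sub_zero, sub_self, Matrix.mul_zero,
    Matrix.zero_mul, Matrix.mul_add, Matrix.add_mul, hQ] at this
  rw [this, fromBlocks_smul, ← two_smul ℝ, smul_smul]
  norm_num

end HadamardBlocks

def qcol (m j n : ℕ) : ℝ :=
  if j = 0 then (√m)⁻¹
  else if n < j then (√(j * (j + 1)))⁻¹
  else if n = j then -j * (√(j * (j + 1)))⁻¹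
  else 0

theorem Qmat_apply (m : ℕ) (i j : Fin m) : Qmat m i j = qcol m j i := by
  simp only [Qmat, qcol, Matrix.of_apply]
  norm_cast

theorem sum_range_qcol_mul {m j : ℕ} (hj : j ≠ 0) (hjm : j < m) (v : ℕ → ℝ) :
    ∑ n ∈ Finset.range m, qcol m j n * v n =
      (√(j * (j + 1)))⁻¹ * (∑ n ∈ Finset.range j, v n - j * v j) := by
  rw [← Finset.sum_subset (Finset.range_subset_range.mpr hjm) fun n _ hn => ?_,
    Finset.sum_range_succ, mul_sub, Finset.mul_sum]
  · congr 1
    · exact Finset.sum_congr rfl fun n hn => by simp [qcol, hj, Finset.mem_range.mp hn]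
    · simp only [qcol, hj, if_false, lt_self_iff_false, if_true]
      ring
  · have : j < n := by rw [Finset.mem_range, not_lt] at hn; omega
    simp [qcol, hj, this.not_gt, this.ne']

theorem sum_range_qcol_mul_qcol_of_le {m j k : ℕ} (hjk : j ≤ k) (hkm : k < m) :
    ∑ n ∈ Finset.range m, qcol m j n * qcol m k n = if j = k then 1 else 0 := by
  have hm : (0 : ℝ) < m := Nat.cast_pos.mpr (by omega)
  rcases eq_or_ne j 0 with rfl | hj
  · rcases eq_or_ne k 0 with rfl | hk
    · simp only [qcol, if_true, Finset.sum_const, Finset.card_range, nsmul_eq_mul]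
      rw [← mul_inv, Real.mul_self_sqrt hm.le, mul_inv_cancel₀ hm.ne']
    · simp_rw [mul_comm (qcol m 0 _), sum_range_qcol_mul hk hkm]
      simp [qcol, hk.symm]
  · have hjm := hjk.trans_lt hkm
    rw [sum_range_qcol_mul hj hjm]
    rcases hjk.eq_or_lt with rfl | hlt
    · have hj0 : (0 : ℝ) < j := Nat.cast_pos.mpr (Nat.pos_of_ne_zero hj)
      have hc : (√(j * (j + 1)))⁻¹ ^ 2 * (j * (j + 1)) = (1 : ℝ) := by
        rw [inv_pow, Real.sq_sqrt (by positivity), inv_mul_cancel₀ (by positivity)]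
      simp only [qcol, hj, if_false, lt_self_iff_false, if_true, Finset.sum_const,
        Finset.sum_congr rfl fun n hn => if_pos (Finset.mem_range.mp hn), Finset.card_range,
        nsmul_eq_mul]
      linear_combination hc
    · simp [qcol, hlt.ne, hlt,
        Finset.sum_congr rfl fun n hn => if_pos ((Finset.mem_range.mp hn).trans hlt)]

theorem sum_range_qcol_mul_qcol {m j k : ℕ} (hjm : j < m) (hkm : k < m) :
    ∑ n ∈ Finset.range m, qcol m j n * qcol m k n = if j = k then 1 else 0 := by
  rcases le_total j k with h | h
  · exact sum_range_qcol_mul_qcol_of_le h hkm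
  · simp_rw [mul_comm (qcol m j _), sum_range_qcol_mul_qcol_of_le h hjm, eq_comm]

theorem sum_range_qcol {m j : ℕ} (hjm : j < m) :
    ∑ n ∈ Finset.range m, qcol m j n = if j = 0 then √m else 0 := by
  rcases eq_or_ne j 0 with rfl | hj
  · simp only [qcol, if_true, Finset.sum_const, Finset.card_range, nsmul_eq_mul]
    field_simp
    exact (Real.sq_sqrt m.cast_nonneg).symm
  · simpa [hj] using sum_range_qcol_mul hj hjm 1

theorem Qmat_transpose_mul_self (m : ℕ) : (Qmat m)ᵀ * Qmat m = 1 := by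
  ext j k
  simp only [mul_apply, transpose_apply, Qmat_apply]
  rw [Fin.sum_univ_eq_sum_range (fun n => qcol m j n * qcol m k n),
    sum_range_qcol_mul_qcol j.isLt k.isLt]
  simp_rw [Fin.val_inj, one_apply]

theorem Qmat_transpose_mul_ones_mul (m : ℕ) :
    (Qmat m)ᵀ * of (fun _ _ => (1 : ℝ)) * Qmat m =
      diagonal fun i : Fin m => if (i : ℕ) = 0 then (m : ℝ) else 0 := by
  ext j k
  simp only [mul_apply, transpose_apply, of_apply, mul_one, Qmat_apply]
  rw [← Finset.mul_sum, Fin.sum_univ_eq_sum_range (qcol m j),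
    Fin.sum_univ_eq_sum_range (qcol m k), sum_range_qcol j.isLt, sum_range_qcol k.isLt,
    diagonal_apply]
  by_cases hj : (j : ℕ) = 0 <;> by_cases hk : (k : ℕ) = 0 <;>
    simp [hj, hk, Fin.ext_iff, eq_comm]

def diagHead (m : ℕ) (a b : ℝ) : Matrix (Fin m) (Fin m) ℝ :=
  diagonal fun i => if (i : ℕ) = 0 then a else b

section DiagHead

variable {m : ℕ}

theorem diagHead_add (a b c d : ℝ) :
    diagHead m a b + diagHead m c d = diagHead m (a + c) (b + d) := by
  simp only [diagHead, diagonal_add, ite_add_ite]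

theorem diagHead_sub (a b c d : ℝ) :
    diagHead m a b - diagHead m c d = diagHead m (a - c) (b - d) := by
  simp only [diagHead, diagonal_sub, ite_sub_ite]

theorem neg_diagHead (a b : ℝ) : -diagHead m a b = diagHead m (-a) (-b) := by
  simp only [diagHead, diagonal_neg, neg_ite]

theorem smul_diagHead (r a b : ℝ) : r • diagHead m a b = diagHead m (r * a) (r * b) := by
  simp only [diagHead, ← diagonal_smul, Pi.smul_def, smul_eq_mul, mul_ite]

end DiagHead

theorem Qmat_transpose_mul_Amat_mul (m : ℕ) (a : ℝ) :
    (Qmat m)ᵀ * Amat m a * Qmat m = diagHead m 1 a := by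
  simp only [Amat, Matrix.mul_add, Matrix.add_mul, Matrix.mul_smul, Matrix.smul_mul,
    Matrix.mul_one, Qmat_transpose_mul_self, Qmat_transpose_mul_ones_mul]
  ext i k
  have : (m : ℝ) ≠ 0 := Nat.cast_ne_zero.mpr i.pos.ne'
  by_cases hik : i = k
  · subst hik
    by_cases h0 : (i : ℕ) = 0 <;> simp [diagHead, h0, div_mul_cancel₀ _ this]
  · simp [diagHead, hik]

theorem Qmat_transpose_mul_Bmat_mul (m : ℕ) (b : ℝ) :
    (Qmat m)ᵀ * Bmat m b * Qmat m = diagHead m 1 b :=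
  Qmat_transpose_mul_Amat_mul m b

theorem Pmat_eq_hadamardBlocks (m : ℕ) : Pmat m = hadamardBlocks (Qmat m) := rfl

theorem Pmat_transpose_mul_Hodd_mul (m : ℕ) (α β : ℝ) :
    (Pmat m)ᵀ * Hodd m α β * Pmat m =
      fromBlocks (diagHead m 1 ((α + β) / 2)) (diagHead m 0 ((α - β) / 2))
        (diagHead m 1 ((α + β) / 2)) (diagHead m 0 ((α - β) / 2)) := by
  rw [Pmat_eq_hadamardBlocks, Hodd, hadamardBlocks_transpose_mul_fromBlocks_mul]
  simp only [add_zero, sub_zero, Matrix.mul_add, Matrix.mul_sub, Matrix.add_mul, Matrix.sub_mul,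
    Qmat_transpose_mul_Amat_mul, Qmat_transpose_mul_Bmat_mul, diagHead_add, diagHead_sub,
    fromBlocks_smul, smul_diagHead]
  congr 2 <;> ring

theorem Pmat_transpose_mul_Heven_mul (m : ℕ) (α β : ℝ) :
    (Pmat m)ᵀ * Heven m α β * Pmat m =
      fromBlocks (diagHead m 1 ((α + β) / 2)) (-diagHead m 0 ((α - β) / 2))
        (-diagHead m 1 ((α + β) / 2)) (diagHead m 0 ((α - β) / 2)) := by
  rw [Pmat_eq_hadamardBlocks, Heven, hadamardBlocks_transpose_mul_fromBlocks_mul]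
  simp only [zero_add, sub_zero, zero_sub, neg_zero, Matrix.mul_add, Matrix.mul_sub,
    Matrix.mul_neg, Matrix.add_mul, Matrix.sub_mul, Matrix.neg_mul, Qmat_transpose_mul_Amat_mul, Qmat_transpose_mul_Bmat_mul,
    neg_diagHead, diagHead_add, diagHead_sub, fromBlocks_smul, smul_diagHead]
  congr 2 <;> ring

theorem Pmat_transpose_mul_Hmean_mul (m : ℕ) (α β : ℝ) :
    (Pmat m)ᵀ * ((1 / 2 : ℝ) • (Hodd m α β + Heven m α β)) * Pmat m =
      fromBlocks (diagHead m 1 ((α + β) / 2)) 0 0 (diagHead m 0 ((α - β) / 2)) := by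
  rw [Matrix.mul_smul, Matrix.smul_mul, Matrix.mul_add, Matrix.add_mul,
    Pmat_transpose_mul_Hodd_mul, Pmat_transpose_mul_Heven_mul, fromBlocks_add, fromBlocks_smul]
  simp only [add_neg_cancel, smul_zero, ← two_smul ℝ, smul_smul]
  norm_num

end Dipole

open Dipole in
theorem Dipole.diagonalization_general
    (m : ℕ) (α β : ℝ) :
    (Qmat m)ᵀ * Qmat m = 1 ∧ Qmat m * (Qmat m)ᵀ = 1 ∧
    (Qmat m)ᵀ * Amat m α * Qmat m =
      Matrix.diagonal (fun i : Fin m => if (i : ℕ) = 0 then 1 else α) ∧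
    (Qmat m)ᵀ * Bmat m β * Qmat m =
      Matrix.diagonal (fun i : Fin m => if (i : ℕ) = 0 then 1 else β) ∧
    (Pmat m)ᵀ * Pmat m = 1 ∧ Pmat m * (Pmat m)ᵀ = 1 ∧
    (Pmat m)ᵀ * Hodd m α β * Pmat m =
      Matrix.fromBlocks
        (Matrix.diagonal fun i : Fin m => if (i : ℕ) = 0 then 1 else (α + β) / 2)
        (Matrix.diagonal fun i : Fin m => if (i : ℕ) = 0 then 0 else (α - β) / 2)
        (Matrix.diagonal fun i : Fin m => if (i : ℕ) = 0 then 1 else (α + β) / 2)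
        (Matrix.diagonal fun i : Fin m => if (i : ℕ) = 0 then 0 else (α - β) / 2) ∧
    (Pmat m)ᵀ * Heven m α β * Pmat m =
      Matrix.fromBlocks
        (Matrix.diagonal fun i : Fin m => if (i : ℕ) = 0 then 1 else (α + β) / 2)
        (-(Matrix.diagonal fun i : Fin m => if (i : ℕ) = 0 then 0 else (α - β) / 2))
        (-(Matrix.diagonal fun i : Fin m => if (i : ℕ) = 0 then 1 else (α + β) / 2))
        (Matrix.diagonal fun i : Fin m => if (i : ℕ) = 0 then 0 else (α - β) / 2) ∧
    (Pmat m)ᵀ * ((1 / 2 : ℝ) • (Hodd m α β + Heven m α β)) * Pmat m =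
      Matrix.fromBlocks
        (Matrix.diagonal fun i : Fin m => if (i : ℕ) = 0 then 1 else (α + β) / 2) 0 0
        (Matrix.diagonal fun i : Fin m => if (i : ℕ) = 0 then 0 else (α - β) / 2) := by
  have hQ := Qmat_transpose_mul_self m
  have hP : (Pmat m)ᵀ * Pmat m = 1 := hadamardBlocks_transpose_mul_self hQ
  exact ⟨hQ, mul_eq_one_comm.mp hQ, Qmat_transpose_mul_Amat_mul m α,
    Qmat_transpose_mul_Bmat_mul m β, hP, mul_eq_one_comm.mp hP,
    Pmat_transpose_mul_Hodd_mul m α β, Pmat_transpose_mul_Heven_mul m α β,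
    Pmat_transpose_mul_Hmean_mul m α β⟩

open Dipole in
/-- **Lemma 3.3 (diagonalization of `A`, `B`, `H_odd`, `H_even` and `H`).**
`Q` is orthogonal with `Qᵀ A Q = diag(1, α, …, α)` and `Qᵀ B Q = diag(1, β, …, β)`;
`P` is orthogonal with `Pᵀ H_odd P = [[D₁, D₂], [D₁, D₂]]`,
`Pᵀ H_even P = [[D₁, −D₂], [−D₁, D₂]]` and `Pᵀ H P = diag(1, γ, …, γ, 0, δ, …, δ)`
for `H = (H_odd + H_even)/2`, `D₁ = diag(1, γ, …, γ)`, `D₂ = diag(0, δ, …, δ)`. -/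
theorem Dipole.diagonalization
    (m : ℕ) (hm : 2 ≤ m) (α β : ℝ)
    (hα : α ∈ Set.Icc (-(1 / ((m : ℝ) - 1))) 1)
    (hβ : β ∈ Set.Icc (-(1 / ((m : ℝ) - 1))) 1) :
    (Qmat m)ᵀ * Qmat m = 1 ∧ Qmat m * (Qmat m)ᵀ = 1 ∧
    (Qmat m)ᵀ * Amat m α * Qmat m =
      Matrix.diagonal (fun i : Fin m => if (i : ℕ) = 0 then 1 else α) ∧
    (Qmat m)ᵀ * Bmat m β * Qmat m =
      Matrix.diagonal (fun i : Fin m => if (i : ℕ) = 0 then 1 else β) ∧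
    (Pmat m)ᵀ * Pmat m = 1 ∧ Pmat m * (Pmat m)ᵀ = 1 ∧
    (Pmat m)ᵀ * Hodd m α β * Pmat m =
      Matrix.fromBlocks
        (Matrix.diagonal fun i : Fin m => if (i : ℕ) = 0 then 1 else (α + β) / 2)
        (Matrix.diagonal fun i : Fin m => if (i : ℕ) = 0 then 0 else (α - β) / 2)
        (Matrix.diagonal fun i : Fin m => if (i : ℕ) = 0 then 1 else (α + β) / 2)
        (Matrix.diagonal fun i : Fin m => if (i : ℕ) = 0 then 0 else (α - β) / 2) ∧
    (Pmat m)ᵀ * Heven m α β * Pmat m =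
      Matrix.fromBlocks
        (Matrix.diagonal fun i : Fin m => if (i : ℕ) = 0 then 1 else (α + β) / 2)
        (-(Matrix.diagonal fun i : Fin m => if (i : ℕ) = 0 then 0 else (α - β) / 2))
        (-(Matrix.diagonal fun i : Fin m => if (i : ℕ) = 0 then 1 else (α + β) / 2))
        (Matrix.diagonal fun i : Fin m => if (i : ℕ) = 0 then 0 else (α - β) / 2) ∧
    (Pmat m)ᵀ * ((1 / 2 : ℝ) • (Hodd m α β + Heven m α β)) * Pmat m =
      Matrix.fromBlocks
        (Matrix.diagonal fun i : Fin m => if (i : ℕ) = 0 then 1 else (α + β) / 2) 0 0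
        (Matrix.diagonal fun i : Fin m => if (i : ℕ) = 0 then 0 else (α - β) / 2) :=
  Dipole.diagonalization_general m α β
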